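/- For N ≥ 2, an N-partite correlation P is causal if and only if it can be decomposed as P(a|x) = Σ_K q_K · P_K(a_K|x_K) · P_{K,x_K,a_K}(a_{N∖K}|x_{N∖K}), where the sum runs over all nonempty strict subsets K of {1,…,N}, with q_K ≥ 0 such that Σ_K q_K = 1, where each P_K(a_K|x_K) is a causal |K|-partite correlation, and where for each (K, x_K, a_K), P_{K,x_K,a_K}(a_{N∖K}|x_{N∖K}) is a causal (N−|K|)-partite correlation. -/

import Mathlib

/-- A correlation for the parties in the finite set `S`, where party `i` has input set `X i`
and output set `A i`: a real number `P x a` for each assignment of inputs `x` and outputs `a`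
for the parties in `S`. -/
def Corr {ι : Type} (X A : ι → Type) (S : Finset ι) : Type :=
  ((i : {j // j ∈ S}) → X i.1) → ((i : {j // j ∈ S}) → A i.1) → ℝ

/-- `p` is a probability distribution on the finite type `α`. -/
def IsProbDist {α : Type} [Fintype α] (p : α → ℝ) : Prop :=
  (∀ a, 0 ≤ p a) ∧ ∑ a, p a = 1

/-- Restriction of a tuple indexed by `S` to a subset `T ⊆ S`. -/
def restr {ι : Type} {X : ι → Type} {S T : Finset ι} (h : T ⊆ S)
    (x : (i : {j // j ∈ S}) → X i.1) : (i : {j // j ∈ T}) → X i.1 :=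
  fun i => x ⟨i.1, h i.2⟩

theorem erase_sub {ι : Type} [DecidableEq ι] (S : Finset ι) (k : ι) : S.erase k ⊆ S :=
  fun _ hi => Finset.mem_of_mem_erase hi

theorem sdiff_sub {ι : Type} [DecidableEq ι] (S K : Finset ι) : S \ K ⊆ S :=
  fun _ hi => (Finset.mem_sdiff.mp hi).1

/-- Combine a tuple on `K` and a tuple on `S \ K` into a tuple on `S`. -/
def glue {ι : Type} [DecidableEq ι] {X : ι → Type} {S K : Finset ι} (_ : K ⊆ S)
    (u : (i : {j // j ∈ K}) → X i.1) (v : (i : {j // j ∈ S \ K}) → X i.1) :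
    (i : {j // j ∈ S}) → X i.1 :=
  fun i => if h : i.1 ∈ K then u ⟨i.1, h⟩ else v ⟨i.1, Finset.mem_sdiff.mpr ⟨i.2, h⟩⟩

/-- Insert a value for party `k` into a tuple on `S.erase k`, giving a tuple on `S`. -/
def ins {ι : Type} [DecidableEq ι] {X : ι → Type} {S : Finset ι} {k : ι} (_ : k ∈ S)
    (xk : X k) (u : (i : {j // j ∈ S.erase k}) → X i.1) : (i : {j // j ∈ S}) → X i.1 :=
  fun i => if h : i.1 = k then cast (congrArg X h.symm) xk
    else u ⟨i.1, Finset.mem_erase.mpr ⟨h, i.2⟩⟩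

/-- Causal correlations, defined by induction on the number of parties: any single-party
probability distribution is causal; a correlation on a set `S` of at least two parties is
causal iff it is a convex combination, over choices of a party `k ∈ S` acting first, of
products of a single-party distribution for `k` with causal correlations for the remaining
parties `S.erase k` that may depend on the input and output of party `k`. -/
inductive IsCausal {ι : Type} [DecidableEq ι] (X A : ι → Type) [∀ i, Fintype (A i)] :
    (S : Finset ι) → Corr X A S → Prop
  | base (k : ι) (P : Corr X A {k}) (hP : ∀ x, IsProbDist (P x)) : IsCausal X A {k} P
  | step (S : Finset ι) (hS : 2 ≤ S.card) (P : Corr X A S)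
      (q : {j // j ∈ S} → ℝ)
      (Pfirst : (k : {j // j ∈ S}) → X k.1 → A k.1 → ℝ)
      (Prest : (k : {j // j ∈ S}) → X k.1 → A k.1 → Corr X A (S.erase k.1))
      (hq : ∀ k, 0 ≤ q k)
      (hq1 : ∑ k ∈ S.attach, q k = 1)
      (hPfirst : ∀ k xk, IsProbDist (Pfirst k xk))
      (hPrest : ∀ k xk ak, IsCausal X A (S.erase k.1) (Prest k xk ak))
      (hP : ∀ x a, P x a = ∑ k ∈ S.attach, q k * Pfirst k (x k) (a k) *
            Prest k (x k) (a k) (restr (erase_sub S k.1) x) (restr (erase_sub S k.1) a)) :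
      IsCausal X A S P

/-!
Causality is preserved by two operations: convex combinations, and the sequential
composition `Corr.seq`, in which the parties of `K` act first according to a causal
correlation and those of `S \ K` then act according to causal correlations that may depend on
the inputs and outputs of `K`. Both are proved by induction along the definition of causality,
regrouping the terms by the party that acts first; this gives one direction. Conversely, the
defining decomposition of a causal correlation already is one over the singletons `K = {k}`.
The other subsets get weight zero and the uniform correlation, which is causal as soon as
every party with an input has an output, as is the case in any causal correlation.
-/

open Finset

theorem isProbDist_uniform (α : Type) [Fintype α] [Nonempty α] :
    IsProbDist (fun _ : α => (Fintype.card α : ℝ)⁻¹) := by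
  refine ⟨fun _ => by positivity, ?_⟩
  rw [sum_const, card_univ, nsmul_eq_mul]
  exact mul_inv_cancel₀ (by exact_mod_cast Fintype.card_ne_zero)

theorem IsProbDist.nonempty {α : Type} [Fintype α] {p : α → ℝ} (hp : IsProbDist p) :
    Nonempty α := by
  by_contra hα
  rw [not_nonempty_iff] at hα
  simpa using hp.2

theorem IsProbDist.comp_equiv {α β : Type} [Fintype α] [Fintype β] {p : β → ℝ}
    (hp : IsProbDist p) (e : α ≃ β) : IsProbDist (p ∘ e) :=
  ⟨fun a => hp.1 (e a), by rw [← hp.2]; exact e.sum_comp p⟩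

theorem isProbDist_sum {κ α : Type} [Fintype κ] [Fintype α] {w : κ → ℝ} {p : κ → α → ℝ}
    (hw : ∀ i, 0 ≤ w i) (hw1 : ∑ i, w i = 1) (hp : ∀ i, IsProbDist (p i)) :
    IsProbDist (fun a => ∑ i, w i * p i a) := by
  refine ⟨fun a => sum_nonneg fun i _ => mul_nonneg (hw i) ((hp i).1 a), ?_⟩
  rw [sum_comm, ← hw1]
  exact sum_congr rfl fun i _ => by rw [← mul_sum, (hp i).2, mul_one]

theorem sum_mul_eq_mul_sum_div {κ : Type} [Fintype κ] {t r : κ → ℝ} (ht : ∀ i, 0 ≤ t i) :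
    ∑ i, t i * r i = (∑ i, t i) * ∑ i, t i / (∑ j, t j) * r i := by
  by_cases h0 : ∑ j, t j = 0
  · rw [h0, zero_mul]
    exact sum_eq_zero fun i _ => by
      rw [(sum_eq_zero_iff_of_nonneg fun j _ => ht j).1 h0 i (mem_univ i), zero_mul]
  · rw [mul_sum]
    exact sum_congr rfl fun i _ => by field_simp

section Tuples

variable {ι : Type} {B : ι → Type}

theorem piUnique_symm_eq_restr {k : ι} {S : Finset ι} (hkS : {k} ⊆ S)
    (y : (i : {j // j ∈ S}) → B i.1) :
    (Equiv.piUnique fun i : {j // j ∈ ({k} : Finset ι)} => B i.1).symm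
      (y ⟨k, singleton_subset_iff.1 hkS⟩) = restr hkS y :=
  (Equiv.symm_apply_eq _).2 rfl

variable [DecidableEq ι]

theorem ins_restr {K S : Finset ι} {k : {j // j ∈ S}} (hk : k.1 ∈ K)
    (hKS : K ⊆ S) (h : K.erase k.1 ⊆ S.erase k.1) (x : (i : {j // j ∈ S}) → B i.1) :
    ins hk (x k) (restr h (restr (erase_sub S k.1) x)) = restr hKS x := by
  funext i
  by_cases hi : i.1 = k.1
  · obtain ⟨i, hi'⟩ := i
    subst hi
    simp [ins, restr]
  · simp [ins, restr, hi]

end Tuples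

section Finsets

variable {ι : Type} [DecidableEq ι]

theorem sum_attach_dite_mem {M : Type} [AddCommMonoid M] {K S : Finset ι} (hKS : K ⊆ S)
    (f : {j // j ∈ K} → M) :
    ∑ k ∈ S.attach, (if h : k.1 ∈ K then f ⟨k.1, h⟩ else 0) = ∑ k ∈ K.attach, f k := by
  rw [sum_dite, sum_const_zero, add_zero]
  exact sum_bij' (fun k _ => ⟨k.1.1, (mem_filter.1 k.2).2⟩)
    (fun k _ => ⟨⟨k.1, hKS k.2⟩, by simp [k.2]⟩) (by simp) (by simp) (by simp) (by simp) (by simp)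

theorem sdiff_eq_erase_sdiff_erase {K S : Finset ι} {k : ι} (hk : k ∈ K) :
    S \ K = S.erase k \ K.erase k := by
  ext i
  simp only [mem_sdiff, mem_erase]
  grind

theorem card_tuples_eq_mul_card_erase (A : ι → Type) [∀ i, Fintype (A i)] {T : Finset ι}
    {k : ι} (hk : k ∈ T) :
    Fintype.card ((i : {j // j ∈ T}) → A i.1) =
      Fintype.card (A k) * Fintype.card ((i : {j // j ∈ T.erase k}) → A i.1) := by
  simp only [Fintype.card_pi]
  rw [prod_coe_sort T (fun i => Fintype.card (A i)),
    prod_coe_sort (T.erase k) (fun i => Fintype.card (A i)), (mul_prod_erase T _ hk).symm]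

theorem singleton_mem_filter_nonempty_ssubset {S : Finset ι}
    (hS : 2 ≤ S.card) {k : ι} (hk : k ∈ S) :
    {k} ∈ S.powerset.filter (fun K => K.Nonempty ∧ K ⊂ S) := by
  refine mem_filter.2 ⟨mem_powerset.2 (singleton_subset_iff.2 hk), singleton_nonempty k,
    (singleton_subset_iff.2 hk).ssubset_of_ne fun h => ?_⟩
  rw [← h, card_singleton] at hS
  omega

end Finsets

section Causal

variable {ι : Type} [DecidableEq ι] {X A : ι → Type} [∀ i, Fintype (A i)]

theorem IsCausal.isProbDist_of_card_eq_one {T : Finset ι} {P : Corr X A T}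
    (h : IsCausal X A T P) (hT : T.card = 1) (x : (i : {j // j ∈ T}) → X i.1) :
    IsProbDist (P x) := by
  cases h with
  | base k P hP => exact hP x
  | step S hS => omega

theorem IsCausal.eq_singleton_or_two_le_card {T : Finset ι} {P : Corr X A T}
    (h : IsCausal X A T P) : (∃ k, T = {k}) ∨ 2 ≤ T.card := by
  cases h with
  | base k => exact .inl ⟨k, rfl⟩
  | step S hS => exact .inr hS

theorem IsCausal.exists_step {T : Finset ι} {P : Corr X A T} (h : IsCausal X A T P)
    (hT : 2 ≤ T.card) :
    ∃ (q : {j // j ∈ T} → ℝ) (Pfirst : (k : {j // j ∈ T}) → X k.1 → A k.1 → ℝ)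
      (Prest : (k : {j // j ∈ T}) → X k.1 → A k.1 → Corr X A (T.erase k.1)),
      (∀ k, 0 ≤ q k) ∧ (∑ k ∈ T.attach, q k = 1) ∧
      (∀ k xk, IsProbDist (Pfirst k xk)) ∧
      (∀ k xk ak, IsCausal X A (T.erase k.1) (Prest k xk ak)) ∧
      (∀ x a, P x a = ∑ k ∈ T.attach, q k * Pfirst k (x k) (a k) *
        Prest k (x k) (a k) (restr (erase_sub T k.1) x) (restr (erase_sub T k.1) a)) := by
  cases h with
  | base k => simp at hT
  | step S hS P q Pfirst Prest hq hq1 hPfirst hPrest hP =>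
    exact ⟨q, Pfirst, Prest, hq, hq1, hPfirst, hPrest, hP⟩

theorem IsCausal.nonempty_output {T : Finset ι} {P : Corr X A T} (h : IsCausal X A T P) :
    ∀ i ∈ T, X i → Nonempty (A i) := by
  cases h with
  | base k P hP =>
    intro i hi xi
    obtain rfl := mem_singleton.1 hi
    obtain ⟨a⟩ := (hP ((Equiv.piUnique _).symm xi)).nonempty
    exact ⟨Equiv.piUnique _ a⟩
  | step _ _ _ _ _ _ _ _ hPfirst => exact fun i hi xi => (hPfirst ⟨i, hi⟩ xi).nonempty

def Corr.reindex {T T' : Finset ι} (e : T = T') (P : Corr X A T) : Corr X A T' :=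
  fun x a => P (restr e.subset x) (restr e.subset a)

theorem IsCausal.reindex {T T' : Finset ι} (e : T = T') {P : Corr X A T}
    (h : IsCausal X A T P) : IsCausal X A T' (P.reindex e) := by
  subst e; exact h

variable (X A) in
noncomputable def uniformCorr (T : Finset ι) : Corr X A T :=
  fun _ _ => (Fintype.card ((i : {j // j ∈ T}) → A i.1) : ℝ)⁻¹

theorem isCausal_uniformCorr {T : Finset ι} (hT : T.Nonempty)
    (hA : ∀ i ∈ T, X i → Nonempty (A i)) : IsCausal X A T (uniformCorr X A T) := by
  induction T using strongInduction with
  | H T ih =>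
  obtain ⟨k, hk⟩ := hT
  rcases Nat.lt_or_ge T.card 2 with hT1 | hT2
  · have hT1' : T.card = 1 := by have := card_pos.2 ⟨k, hk⟩; omega
    obtain ⟨k, rfl⟩ := card_eq_one.1 hT1'
    refine .base k _ fun x => ?_
    have : ∀ i : {j // j ∈ ({k} : Finset ι)}, Nonempty (A i.1) := fun i => hA i i.2 (x i)
    exact isProbDist_uniform _
  · refine .step T hT2 _ (fun k' => if k' = ⟨k, hk⟩ then 1 else 0)
      (fun k' _ _ => (Fintype.card (A k'.1) : ℝ)⁻¹) (fun k' _ _ => uniformCorr X A _)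
      (fun _ => by positivity) (by simp) (fun k' xk => ?_) (fun k' _ _ => ?_) (fun x a => ?_)
    · have := hA k' k'.2 xk
      exact isProbDist_uniform _
    · exact ih _ (erase_ssubset k'.2) (by rw [← card_pos, card_erase_of_mem k'.2]; omega)
        fun i hi => hA i (mem_of_mem_erase hi)
    · rw [sum_eq_single_of_mem ⟨k, hk⟩ (mem_attach _ _) fun k' _ hk' => by simp [hk']]
      simp only [uniformCorr, if_true, one_mul]
      rw [card_tuples_eq_mul_card_erase A hk, Nat.cast_mul, mul_inv]

/-- `m k xk ak` plays the role of `q k * Pfirst k xk ak` in `IsCausal.step`; normalising it is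
left to this lemma. -/
theorem isCausal_of_weighted_step {S : Finset ι} (hS : 2 ≤ S.card)
    (hA : ∀ i ∈ S, X i → Nonempty (A i)) {P : Corr X A S} (c : {j // j ∈ S} → ℝ)
    (m : (k : {j // j ∈ S}) → X k.1 → A k.1 → ℝ)
    (R : (k : {j // j ∈ S}) → X k.1 → A k.1 → Corr X A (S.erase k.1))
    (hc : ∀ k, 0 ≤ c k) (hc1 : ∑ k ∈ S.attach, c k = 1) (hm : ∀ k xk ak, 0 ≤ m k xk ak)
    (hmc : ∀ k xk, ∑ ak, m k xk ak = c k)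
    (hR : ∀ k xk ak, m k xk ak ≠ 0 → IsCausal X A (S.erase k.1) (R k xk ak))
    (hP : ∀ x a, P x a = ∑ k ∈ S.attach, m k (x k) (a k) *
      R k (x k) (a k) (restr (erase_sub S k.1) x) (restr (erase_sub S k.1) a)) :
    IsCausal X A S P := by
  have hm0 : ∀ k xk ak, c k = 0 → m k xk ak = 0 := fun k xk ak h0 =>
    (sum_eq_zero_iff_of_nonneg fun b _ => hm k xk b).1 ((hmc k xk).trans h0) ak (mem_univ _)
  refine .step S hS P c
    (fun k xk ak => if c k = 0 then (Fintype.card (A k.1) : ℝ)⁻¹ else m k xk ak / c k)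
    (fun k xk ak => if m k xk ak = 0 then uniformCorr X A _ else R k xk ak)
    hc hc1 (fun k xk => ?_) (fun k xk ak => ?_) (fun x a => ?_)
  · by_cases h0 : c k = 0
    · have := hA k k.2 xk
      simpa only [h0, if_true] using isProbDist_uniform (A k.1)
    · simp only [h0, if_false]
      exact ⟨fun ak => div_nonneg (hm k xk ak) (hc k), by rw [← sum_div, hmc, div_self h0]⟩
  · split_ifs with h0
    · exact isCausal_uniformCorr (by rw [← card_pos, card_erase_of_mem k.2]; omega)
        fun i hi => hA i (mem_of_mem_erase hi)
    · exact hR k xk ak h0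
  · rw [hP]
    refine sum_congr rfl fun k _ => ?_
    by_cases h0 : c k = 0
    · simp [h0, hm0 k _ _ h0]
    by_cases hm' : m k (x k) (a k) = 0
    · simp [h0, hm']
    · simp only [h0, hm', if_false]
      field_simp

theorem isCausal_sum {κ : Type} [Fintype κ] {S : Finset ι} {w : κ → ℝ} {Q : κ → Corr X A S}
    (hw : ∀ i, 0 ≤ w i) (hw1 : ∑ i, w i = 1) (hQ : ∀ i, IsCausal X A S (Q i)) :
    IsCausal X A S (fun x a => ∑ i, w i * Q i x a) := by
  induction S using strongInduction generalizing w with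
  | H S ih =>
  obtain ⟨i₀⟩ : Nonempty κ := by
    by_contra hκ
    rw [not_nonempty_iff] at hκ
    simp at hw1
  rcases (hQ i₀).eq_singleton_or_two_le_card with ⟨k, rfl⟩ | hS
  · exact .base k _ fun x =>
      isProbDist_sum hw hw1 fun i => (hQ i).isProbDist_of_card_eq_one (card_singleton k) x
  choose q Pf Pr hq hq1 hPf hPr hP using fun i => (hQ i).exists_step hS
  -- `t k xk ak i` is the weight with which the `i`-th correlation lets `k` act first with
  -- output `ak`; the rest is the correspondingly reweighted mixture of the `Pr i`.
  set t : (k : {j // j ∈ S}) → X k.1 → A k.1 → κ → ℝ :=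
    fun k xk ak i => w i * q i k * Pf i k xk ak with ht
  have ht0 : ∀ k xk ak i, 0 ≤ t k xk ak i := fun k xk ak i =>
    mul_nonneg (mul_nonneg (hw i) (hq i k)) ((hPf i k xk).1 ak)
  refine isCausal_of_weighted_step hS (hQ i₀).nonempty_output (fun k => ∑ i, w i * q i k)
    (fun k xk ak => ∑ i, t k xk ak i)
    (fun k xk ak y b => ∑ i, t k xk ak i / (∑ j, t k xk ak j) * Pr i k xk ak y b)
    (fun k => sum_nonneg fun i _ => mul_nonneg (hw i) (hq i k)) ?_
    (fun k xk ak => sum_nonneg fun i _ => ht0 k xk ak i) (fun k xk => ?_)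
    (fun k xk ak hm => ?_) (fun x a => ?_)
  · rw [sum_comm, ← hw1]
    exact sum_congr rfl fun i _ => by rw [← mul_sum, hq1 i, mul_one]
  · rw [sum_comm]
    exact sum_congr rfl fun i _ => by rw [ht]; simp only; rw [← mul_sum, (hPf i k xk).2, mul_one]
  · refine ih _ (erase_ssubset k.2) (fun i => div_nonneg (ht0 k xk ak i) (sum_nonneg
      fun j _ => ht0 k xk ak j)) (by rw [← sum_div, div_self hm]) fun i => hPr i k xk ak
  · calc ∑ i, w i * Q i x a
        = ∑ k ∈ S.attach, ∑ i, t k (x k) (a k) i *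
            Pr i k (x k) (a k) (restr (erase_sub S k.1) x) (restr (erase_sub S k.1) a) := by
          simp only [hP, mul_sum]
          rw [sum_comm]
          exact sum_congr rfl fun k _ => sum_congr rfl fun i _ => by rw [ht]; ring
      _ = _ := sum_congr rfl fun k _ => sum_mul_eq_mul_sum_div (ht0 k (x k) (a k))

def Corr.seq {K S : Finset ι} (hKS : K ⊆ S) (P₁ : Corr X A K)
    (P₂ : ((i : {j // j ∈ K}) → X i.1) → ((i : {j // j ∈ K}) → A i.1) → Corr X A (S \ K)) :
    Corr X A S :=
  fun x a => P₁ (restr hKS x) (restr hKS a) *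
    P₂ (restr hKS x) (restr hKS a) (restr (sdiff_sub S K) x) (restr (sdiff_sub S K) a)

theorem isCausal_seq_of_singleton {k : ι} {S : Finset ι} (hkS : {k} ⊆ S)
    (hSk : (S \ {k}).Nonempty) (hA : ∀ i ∈ S, X i → Nonempty (A i)) {P₁ : Corr X A {k}}
    (h₁ : ∀ x, IsProbDist (P₁ x))
    {P₂ : ((i : {j // j ∈ ({k} : Finset ι)}) → X i.1) →
      ((i : {j // j ∈ ({k} : Finset ι)}) → A i.1) → Corr X A (S \ {k})}
    (h₂ : ∀ u v, IsCausal X A (S \ {k}) (P₂ u v)) :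
    IsCausal X A S (Corr.seq hkS P₁ P₂) := by
  have hk : k ∈ S := singleton_subset_iff.1 hkS
  have hS : 2 ≤ S.card := by
    have := card_sdiff_add_card_eq_card hkS
    have := hSk.card_pos
    rw [card_singleton] at *
    omega
  refine isCausal_of_weighted_step hS hA (fun k' => if k' = ⟨k, hk⟩ then 1 else 0)
    (fun k' xk ak => if h : k'.1 = k then
      P₁ ((Equiv.piUnique _).symm (cast (congrArg X h) xk))
        ((Equiv.piUnique _).symm (cast (congrArg A h) ak)) else 0)
    (fun k' xk ak y b => if h : k'.1 = k then
      (P₂ ((Equiv.piUnique _).symm (cast (congrArg X h) xk))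
        ((Equiv.piUnique _).symm (cast (congrArg A h) ak))).reindex
        (by rw [h, sdiff_singleton_eq_erase]) y b else 0)
    (fun _ => by positivity) (by simp) (fun k' xk ak => ?_) (fun k' xk => ?_)
    (fun k' xk ak hm => ?_) (fun x a => ?_)
  · split_ifs
    exacts [(h₁ _).1 _, le_rfl]
  · obtain ⟨k', hk'⟩ := k'
    by_cases h : k' = k
    · subst h
      simpa using ((h₁ _).comp_equiv (Equiv.piUnique _).symm).2
    · simp [h]
  · obtain ⟨k', hk'⟩ := k'
    by_cases h : k' = k
    · subst h
      simpa using (h₂ _ _).reindex (by rw [sdiff_singleton_eq_erase])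
    · simp [h] at hm
  · rw [sum_eq_single_of_mem ⟨k, hk⟩ (mem_attach _ _) fun k' _ hk' => by
      simp [Subtype.ext_iff.not.1 hk']]
    simp only [dite_true, cast_eq]
    rw [piUnique_symm_eq_restr hkS x, piUnique_symm_eq_restr hkS a]
    rfl

theorem IsCausal.seq {K : Finset ι} {P₁ : Corr X A K} (h₁ : IsCausal X A K P₁) {S : Finset ι}
    (hKS : K ⊆ S) (hSK : (S \ K).Nonempty) (hA : ∀ i ∈ S, X i → Nonempty (A i))
    {P₂ : ((i : {j // j ∈ K}) → X i.1) → ((i : {j // j ∈ K}) → A i.1) → Corr X A (S \ K)}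
    (h₂ : ∀ u v, IsCausal X A (S \ K) (P₂ u v)) :
    IsCausal X A S (Corr.seq hKS P₁ P₂) := by
  induction h₁ generalizing S with
  | base k P₁ hP₁ => exact isCausal_seq_of_singleton hKS hSK hA hP₁ h₂
  | step K hK P₁ q Pf Pr hq hq1 hPf hPr hP₁ ih =>
  have hS : 2 ≤ S.card := hK.trans (card_le_card hKS)
  -- Whoever acts first in `P₁` acts first overall; `P₂` then joins the remaining parties of `K`.
  refine isCausal_of_weighted_step hS hA (fun k => if h : k.1 ∈ K then q ⟨k.1, h⟩ else 0)
    (fun k xk ak => if h : k.1 ∈ K then q ⟨k.1, h⟩ * Pf ⟨k.1, h⟩ xk ak else 0)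
    (fun k xk ak y b => if h : k.1 ∈ K then
      Corr.seq (erase_subset_erase k.1 hKS) (Pr ⟨k.1, h⟩ xk ak)
        (fun u v => (P₂ (ins h xk u) (ins h ak v)).reindex (sdiff_eq_erase_sdiff_erase h)) y b
      else 0)
    (fun k => by split_ifs; exacts [hq _, le_rfl]) ?_ (fun k xk ak => ?_) (fun k xk => ?_)
    (fun k xk ak hm => ?_) (fun x a => ?_)
  · rw [sum_attach_dite_mem hKS q, hq1]
  · split_ifs
    exacts [mul_nonneg (hq _) ((hPf _ _).1 _), le_rfl]
  · split_ifs
    · rw [← mul_sum, (hPf ⟨k.1, ‹_›⟩ xk).2, mul_one]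
    · exact sum_const_zero
  · have h : k.1 ∈ K := by by_contra h; simp [h] at hm
    simp only [dif_pos h]
    exact ih ⟨k.1, h⟩ xk ak (erase_subset_erase _ hKS) (by rwa [← sdiff_eq_erase_sdiff_erase h])
      (fun i hi => hA i (mem_of_mem_erase hi)) fun u v => (h₂ _ _).reindex _
  · simp only [Corr.seq, hP₁, sum_mul]
    rw [← sum_attach_dite_mem hKS]
    refine sum_congr rfl fun k _ => ?_
    split_ifs with h
    · simp only [Corr.reindex]
      rw [ins_restr h hKS, ins_restr h hKS, mul_assoc]
      rfl
    · simp

def Corr.ofSingle (k : ι) (p : X k → A k → ℝ) : Corr X A {k} :=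
  fun u v => p (Equiv.piUnique _ u) (Equiv.piUnique _ v)

theorem isCausal_ofSingle {k : ι} {p : X k → A k → ℝ} (hp : ∀ xk, IsProbDist (p xk)) :
    IsCausal X A {k} (Corr.ofSingle k p) :=
  .base k _ fun _ => (hp _).comp_equiv (Equiv.piUnique fun i : {j // j ∈ ({k} : Finset ι)} => A i.1)

end Causal

section Singletons

variable {ι : Type} {β : Finset ι → Type} {S : Finset ι} (f : (k : {j // j ∈ S}) → β {k.1})
  (d : (K : Finset ι) → β K)

open Classical in
noncomputable def extendSingletons (K : Finset ι) : β K :=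
  if h : ∃ k : {j // j ∈ S}, {k.1} = K then cast (congrArg β h.choose_spec) (f h.choose) else d K

theorem extendSingletons_singleton (k : {j // j ∈ S}) : extendSingletons f d {k.1} = f k := by
  have h : ∃ k' : {j // j ∈ S}, {k'.1} = ({k.1} : Finset ι) := ⟨k, rfl⟩
  have hcast : ∀ k' (e : {k'.1} = ({k.1} : Finset ι)), cast (congrArg β e) (f k') = f k := by
    rintro k' e
    obtain rfl := Subtype.ext (singleton_injective e)
    rfl
  rw [extendSingletons, dif_pos h]
  exact hcast _ h.choose_spec

theorem extendSingletons_cases {p : (K : Finset ι) → β K → Prop} (hf : ∀ k, p {k.1} (f k))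
    (hd : ∀ K, p K (d K)) (K : Finset ι) : p K (extendSingletons f d K) := by
  by_cases h : ∃ k : {j // j ∈ S}, {k.1} = K
  · obtain ⟨k, rfl⟩ := h
    rw [extendSingletons_singleton]
    exact hf k
  · rw [extendSingletons, dif_neg h]
    exact hd K

variable [DecidableEq ι]

def singletonWeight (q : {j // j ∈ S} → ℝ) (K : Finset ι) : ℝ :=
  ∑ k ∈ S.attach, if K = {k.1} then q k else 0

theorem singletonWeight_nonneg {q : {j // j ∈ S} → ℝ} (hq : ∀ k, 0 ≤ q k) (K : Finset ι) :
    0 ≤ singletonWeight q K :=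
  sum_nonneg fun k _ => by split_ifs; exacts [hq k, le_rfl]

theorem sum_singletonWeight {F : Finset (Finset ι)} (hF : ∀ k ∈ S, {k} ∈ F)
    (q : {j // j ∈ S} → ℝ) : ∑ K ∈ F, singletonWeight q K = ∑ k ∈ S.attach, q k := by
  simp only [singletonWeight]
  rw [sum_comm]
  exact sum_congr rfl fun k _ => by rw [sum_ite_eq', if_pos (hF k.1 k.2)]

theorem sum_attach_singletonWeight_mul {F : Finset (Finset ι)} (hF : ∀ k ∈ S, {k} ∈ F)
    (q : {j // j ∈ S} → ℝ) (G : {K // K ∈ F} → ℝ) :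
    ∑ K ∈ F.attach, singletonWeight q K.1 * G K = ∑ k ∈ S.attach, q k * G ⟨{k.1}, hF k k.2⟩ := by
  simp only [singletonWeight, sum_mul, ite_mul, zero_mul]
  rw [sum_comm]
  refine sum_congr rfl fun k _ => ?_
  rw [sum_eq_single_of_mem ⟨{k.1}, hF k k.2⟩ (mem_attach _ _) fun K _ hK =>
    if_neg fun h => hK (Subtype.ext h), if_pos rfl]

variable {X A : ι → Type} [∀ i, Fintype (A i)]

noncomputable def singletonFirst (Pf : (k : {j // j ∈ S}) → X k.1 → A k.1 → ℝ) :
    (K : Finset ι) → Corr X A K :=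
  extendSingletons (fun k => Corr.ofSingle k.1 (Pf k)) (uniformCorr X A)

noncomputable def singletonRest
    (Pr : (k : {j // j ∈ S}) → X k.1 → A k.1 → Corr X A (S.erase k.1)) :
    (K : Finset ι) → ((i : {j // j ∈ K}) → X i.1) → ((i : {j // j ∈ K}) → A i.1) →
      Corr X A (S \ K) :=
  extendSingletons (fun k u v => (Pr k (Equiv.piUnique _ u) (Equiv.piUnique _ v)).reindex
    (sdiff_singleton_eq_erase k.1 S).symm) (fun K _ _ => uniformCorr X A (S \ K))

theorem isCausal_singletonFirst {Pf : (k : {j // j ∈ S}) → X k.1 → A k.1 → ℝ}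
    (hPf : ∀ k xk, IsProbDist (Pf k xk)) (hA : ∀ i ∈ S, X i → Nonempty (A i)) (K : Finset ι)
    (hK : K.Nonempty) (hKS : K ⊂ S) : IsCausal X A K (singletonFirst Pf K) :=
  extendSingletons_cases (p := fun K P => K.Nonempty → K ⊂ S → IsCausal X A K P) _ _
    (fun k _ _ => isCausal_ofSingle (hPf k))
    (fun _ hK hKS => isCausal_uniformCorr hK fun i hi => hA i (hKS.subset hi)) K hK hKS

theorem isCausal_singletonRest
    {Pr : (k : {j // j ∈ S}) → X k.1 → A k.1 → Corr X A (S.erase k.1)}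
    (hPr : ∀ k xk ak, IsCausal X A (S.erase k.1) (Pr k xk ak))
    (hA : ∀ i ∈ S, X i → Nonempty (A i)) (K : Finset ι) (hK : K.Nonempty) (hKS : K ⊂ S)
    (xK : (i : {j // j ∈ K}) → X i.1) (aK : (i : {j // j ∈ K}) → A i.1) :
    IsCausal X A (S \ K) (singletonRest Pr K xK aK) :=
  extendSingletons_cases (p := fun K (PR : ((i : {j // j ∈ K}) → X i.1) →
      ((i : {j // j ∈ K}) → A i.1) → Corr X A (S \ K)) =>
      K.Nonempty → K ⊂ S → ∀ xK aK, IsCausal X A (S \ K) (PR xK aK)) _ _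
    (fun k _ _ _ _ => (hPr k _ _).reindex _)
    (fun _ _ hKS _ _ => isCausal_uniformCorr (sdiff_nonempty.2 hKS.not_subset)
      fun i hi => hA i (mem_sdiff.1 hi).1) K hK hKS xK aK

end Singletons

/-- for `N ≥ 2`, a correlation is causal iff it decomposes as a convex
combination, over nonempty strict subsets `K` of the parties, of products of a causal
correlation for the parties in `K` with causal correlations for the remaining parties
that may depend on the inputs and outputs of the parties in `K`. -/
theorem isCausal_iff_subset_decomposition {ι : Type} [DecidableEq ι]
    (X A : ι → Type) [∀ i, Fintype (A i)] (S : Finset ι) (hS : 2 ≤ S.card)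
    (P : Corr X A S) :
    IsCausal X A S P ↔
    ∃ (q : Finset ι → ℝ) (PK : (K : Finset ι) → Corr X A K)
      (PR : (K : Finset ι) → ((i : {j // j ∈ K}) → X i.1) → ((i : {j // j ∈ K}) → A i.1) →
        Corr X A (S \ K)),
      (∀ K, 0 ≤ q K) ∧
      (∑ K ∈ S.powerset.filter (fun K => K.Nonempty ∧ K ⊂ S), q K) = 1 ∧
      (∀ K, K.Nonempty → K ⊂ S → IsCausal X A K (PK K)) ∧
      (∀ K, K.Nonempty → K ⊂ S → ∀ xK aK, IsCausal X A (S \ K) (PR K xK aK)) ∧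
      (∀ x a, P x a = ∑ K ∈ (S.powerset.filter (fun K => K.Nonempty ∧ K ⊂ S)).attach,
        q K.1 *
          PK K.1 (restr (Finset.mem_powerset.mp (Finset.mem_filter.mp K.2).1) x)
            (restr (Finset.mem_powerset.mp (Finset.mem_filter.mp K.2).1) a) *
          PR K.1 (restr (Finset.mem_powerset.mp (Finset.mem_filter.mp K.2).1) x)
            (restr (Finset.mem_powerset.mp (Finset.mem_filter.mp K.2).1) a)
            (restr (sdiff_sub S K.1) x) (restr (sdiff_sub S K.1) a)) := by
  have hF : ∀ k ∈ S, {k} ∈ S.powerset.filter (fun K => K.Nonempty ∧ K ⊂ S) :=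
    fun k => singleton_mem_filter_nonempty_ssubset hS
  constructor
  · intro h
    have hA := h.nonempty_output
    obtain ⟨q, Pf, Pr, hq, hq1, hPf, hPr, hP⟩ := h.exists_step hS
    refine ⟨singletonWeight q, singletonFirst Pf, singletonRest Pr, singletonWeight_nonneg hq,
      (sum_singletonWeight hF q).trans hq1, isCausal_singletonFirst hPf hA,
      isCausal_singletonRest hPr hA, fun x a => ?_⟩
    simp only [hP, mul_assoc]
    rw [sum_attach_singletonWeight_mul hF]
    refine sum_congr rfl fun k _ => ?_
    rw [singletonFirst, singletonRest, extendSingletons_singleton, extendSingletons_singleton]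
    rfl
  · rintro ⟨q, PK, PR, hq, hq1, hPK, hPR, hP⟩
    have hA : ∀ i ∈ S, X i → Nonempty (A i) := fun i hi =>
      (hPK {i} (singleton_nonempty i) (mem_filter.1 (hF i hi)).2.2).nonempty_output i
        (mem_singleton_self i)
    have hP' : P = fun x a => ∑ K : {K // K ∈ S.powerset.filter (fun K => K.Nonempty ∧ K ⊂ S)},
        q K.1 * Corr.seq (mem_powerset.1 (mem_filter.1 K.2).1) (PK K.1) (PR K.1) x a := by
      funext x a
      rw [hP, univ_eq_attach]
      exact sum_congr rfl fun K _ => mul_assoc _ _ _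
    rw [hP']
    refine isCausal_sum (fun K => hq K.1) (by rwa [univ_eq_attach, sum_attach]) fun K => ?_
    obtain ⟨hK, hKS⟩ := (mem_filter.1 K.2).2
    exact (hPK K.1 hK hKS).seq _ (sdiff_nonempty.2 hKS.not_subset) hA (hPR K.1 hK hKS)
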